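/- arXiv:math/0112288 — 2 statements merged into one kernel-verified Lean document; each statement's English description precedes it below -/
import Mathlib

section
/- Assume the weak diamond principle: there is g : ω₁ → 2 such that for every f : ω₁ → 2 the set {α < ω₁ : F(f↾α) = g(α)} is stationary, where F : 2^{<ω₁} → 2 separates fans as above. Then T = {f ∈ 2^{<ω₁} : F(f↾α) ≠ g(α) for all limit points α of dom f} is a splitting tree of height ω₁ in which every node has at most 2^{ℵ₀} immediate successors and which is ℵ₀-fan closed. -/
open Cardinal Set

def IsClubIn (C : Set Ordinal) (δ : Ordinal) : Prop :=
  C ⊆ Set.Iio δ ∧ (∀ α < δ, ∃ β ∈ C, α ≤ β) ∧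
    (∀ α < δ, α ≠ 0 → sSup (C ∩ Set.Iio α) = α → α ∈ C)

def IsStationaryIn (S : Set Ordinal) (δ : Ordinal) : Prop :=
  ∀ C : Set Ordinal, IsClubIn C δ → (S ∩ C).Nonempty

/-- Nodes of `2^{<ω₁}` are coded as pairs `(α, f)` with `α < ω₁` and `f : ω₁ → 2`
vanishing at and above `α` (so `f` represents a function `α → 2`).  `T` is Gregory's
tree determined by `F` and the weak diamond guess `g`. -/
def GregoryTree (F : Ordinal.{0} → (Ordinal.{0} → Bool) → Bool) (g : Ordinal.{0} → Bool) :
    Set (Ordinal.{0} × (Ordinal.{0} → Bool)) :=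
  {p | p.1 < (Cardinal.aleph.{0} 1).ord ∧ (∀ β, p.1 ≤ β → p.2 β = false) ∧
    ∀ α, α ≤ p.1 → Order.IsSuccLimit α → F α p.2 ≠ g α}

/-- The tree order of extension on coded nodes. -/
def ple (p q : Ordinal.{0} × (Ordinal.{0} → Bool)) : Prop :=
  p.1 ≤ q.1 ∧ ∀ β < p.1, p.2 β = q.2 β

section GregoryAux

open Ordinal

private lemma o1_limit : Order.IsSuccLimit (Cardinal.aleph.{0} 1).ord :=
  Cardinal.isSuccLimit_ord (Cardinal.aleph0_le_aleph 1)

private lemma olt_add_one (γ : Ordinal.{0}) : γ < γ + 1 := by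
  rw [Ordinal.add_one_eq_succ]; exact Order.lt_succ γ

private lemma oadd_one_le {a b : Ordinal.{0}} (h : a < b) : a + 1 ≤ b := by
  rw [Ordinal.add_one_eq_succ]; exact Order.succ_le_of_lt h

private lemma ole_of_lt_add_one {a b : Ordinal.{0}} (h : a < b + 1) : a ≤ b := by
  rw [Ordinal.add_one_eq_succ] at h; exact Order.lt_succ_iff.1 h

private lemma ole_of_limit_le_add_one {a b : Ordinal.{0}} (h : a ≤ b + 1)
    (hlim : Order.IsSuccLimit a) : a ≤ b := by
  rcases lt_or_eq_of_le h with hl | he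
  · exact ole_of_lt_add_one hl
  · exact absurd (he ▸ hlim)
      (by rw [Ordinal.add_one_eq_succ]; exact Order.not_isSuccLimit_succ b)

private lemma ple_refl (p : Ordinal.{0} × (Ordinal.{0} → Bool)) : ple p p :=
  ⟨le_rfl, fun _ _ => rfl⟩

private lemma ple_trans {p q r : Ordinal.{0} × (Ordinal.{0} → Bool)}
    (h1 : ple p q) (h2 : ple q r) : ple p r :=
  ⟨h1.1.trans h2.1, fun β hβ => (h1.2 β hβ).trans (h2.2 β (hβ.trans_le h1.1))⟩

private lemma gt_unique {F : Ordinal.{0} → (Ordinal.{0} → Bool) → Bool} {g : Ordinal.{0} → Bool}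
    {p q : Ordinal.{0} × (Ordinal.{0} → Bool)}
    (hp : p ∈ GregoryTree F g) (hq : q ∈ GregoryTree F g)
    (h1 : p.1 = q.1) (h2 : ∀ β < p.1, p.2 β = q.2 β) : p = q := by
  obtain ⟨a, f⟩ := p
  obtain ⟨c, u⟩ := q
  simp only [Prod.mk.injEq]
  refine ⟨h1, funext fun β => ?_⟩
  rcases lt_or_ge β a with h | h
  · exact h2 β h
  · exact (hp.2.1 β h).trans (hq.2.1 β (h1 ▸ h)).symm

/-- one-point extension of a node of the Gregory tree stays in the tree. -/
private lemma step_mem {F : Ordinal.{0} → (Ordinal.{0} → Bool) → Bool} {g : Ordinal.{0} → Bool}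
    (hF : ∀ (α : Ordinal.{0}) (f g' : Ordinal.{0} → Bool),
      (∀ β < α, f β = g' β) → F α f = F α g')
    {γ : Ordinal.{0}} {f : Ordinal.{0} → Bool} (h : (γ, f) ∈ GregoryTree F g) (b : Bool) :
    (γ + 1, Function.update f γ b) ∈ GregoryTree F g := by
  obtain ⟨h1, h2, h3⟩ := h
  refine ⟨?_, ?_, ?_⟩
  · rw [Ordinal.add_one_eq_succ]
    exact o1_limit.succ_lt h1
  · intro β hβ
    have hγβ : γ < β := lt_of_lt_of_le (olt_add_one γ) hβ
    show Function.update f γ b β = false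
    rw [Function.update_of_ne (ne_of_gt hγβ)]
    exact h2 β hγβ.le
  · intro α' hα' hlim
    have hle : α' ≤ γ := ole_of_limit_le_add_one hα' hlim
    show F α' (Function.update f γ b) ≠ g α'
    have : F α' (Function.update f γ b) = F α' f :=
      hF α' _ _ fun β hβ => Function.update_of_ne (ne_of_lt (lt_of_lt_of_le hβ hle)) b f
    rw [this]
    exact h3 α' hle hlim

open scoped Classical in
private noncomputable def pick (T : Set (Ordinal.{0} × (Ordinal.{0} → Bool)))
    (lvl lvl' : Ordinal.{0}) (prev : Ordinal.{0} → Bool) (b : Bool) : Ordinal.{0} → Bool :=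
  if h : ∃ u, (lvl', u) ∈ T ∧ ple (lvl + 1, Function.update prev lvl b) (lvl', u) then h.choose
  else prev

private lemma pick_spec {T : Set (Ordinal.{0} × (Ordinal.{0} → Bool))} {lvl lvl' : Ordinal.{0}}
    {prev : Ordinal.{0} → Bool} {b : Bool}
    (h : ∃ u, (lvl', u) ∈ T ∧ ple (lvl + 1, Function.update prev lvl b) (lvl', u)) :
    (lvl', pick T lvl lvl' prev b) ∈ T ∧
      ple (lvl + 1, Function.update prev lvl b) (lvl', pick T lvl lvl' prev b) := by
  unfold pick
  rw [dif_pos h]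
  exact h.choose_spec

private noncomputable def fanAux (T : Set (Ordinal.{0} × (Ordinal.{0} → Bool)))
    (δ : ℕ → Ordinal.{0}) (base : Ordinal.{0} → Bool) : List Bool → (Ordinal.{0} → Bool)
  | [] => base
  | b :: t => pick T (δ t.length) (δ (t.length + 1)) (fanAux T δ base t) b

/-- `ℵ₀`-fan closure of the Gregory tree. -/
private lemma fan_closed (F : Ordinal.{0} → (Ordinal.{0} → Bool) → Bool)
    (hF : ∀ (α : Ordinal.{0}) (f g : Ordinal.{0} → Bool), (∀ β < α, f β = g β) → F α f = F α g)
    (hsep : ∀ (δ : ℕ → Ordinal) (x : List Bool → Ordinal.{0} → Bool),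
      StrictMono δ → (∀ n, δ n < (Cardinal.aleph.{0} 1).ord) →
      (∀ (s : List Bool) (b : Bool) (β : Ordinal.{0}), β < δ s.length → x (s ++ [b]) β = x s β) →
      (∀ s : List Bool, x (s ++ [false]) (δ s.length) ≠ x (s ++ [true]) (δ s.length)) →
      ∃ (g₁ g₂ : ℕ → Bool) (u₁ u₂ : Ordinal.{0} → Bool),
        (∀ (n : ℕ) (β : Ordinal.{0}), β < δ n → u₁ β = x (List.ofFn fun i : Fin n => g₁ i) β) ∧
        (∀ (n : ℕ) (β : Ordinal.{0}), β < δ n → u₂ β = x (List.ofFn fun i : Fin n => g₂ i) β) ∧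
        F (⨆ n, δ n) u₁ ≠ F (⨆ n, δ n) u₂)
    (g : Ordinal.{0} → Bool)
    (δ : ℕ → Ordinal) (x : List Bool → Ordinal.{0} → Bool)
    (hδ : StrictMono δ) (hδ1 : ∀ n, δ n < (Cardinal.aleph.{0} 1).ord)
    (hmem : ∀ s : List Bool, (δ s.length, x s) ∈ GregoryTree F g)
    (hcoh : ∀ (s : List Bool) (b : Bool) (β : Ordinal.{0}),
      β < δ s.length → x (s ++ [b]) β = x s β)
    (hsplit : ∀ s : List Bool, x (s ++ [false]) (δ s.length) ≠ x (s ++ [true]) (δ s.length)) :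
    ∃ (gb : ℕ → Bool) (u : Ordinal.{0} → Bool),
      (∀ (n : ℕ) (β : Ordinal.{0}), β < δ n → u β = x (List.ofFn fun i : Fin n => gb i) β) ∧
      (⨆ n, δ n, u) ∈ GregoryTree F g := by
  obtain ⟨g₁, g₂, u₁, u₂, hc1, hc2, hne⟩ := hsep δ x hδ hδ1 hcoh hsplit
  have hσ1 : (⨆ n, δ n) < (Cardinal.aleph.{0} 1).ord := by
    refine Ordinal.iSup_lt_ord ?_ hδ1
    rw [Cardinal.isRegular_aleph_one.cof_eq, Cardinal.mk_nat]
    exact Cardinal.aleph0_lt_aleph_one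
  have hlt : ∀ n, δ n < ⨆ n, δ n :=
    fun n => lt_of_lt_of_le (hδ n.lt_succ_self) (Ordinal.le_iSup δ (n + 1))
  obtain ⟨gb, u, hcu, hguess⟩ :
      ∃ (gb : ℕ → Bool) (u : Ordinal.{0} → Bool),
        (∀ (n : ℕ) (β : Ordinal.{0}), β < δ n → u β = x (List.ofFn fun i : Fin n => gb i) β) ∧
        F (⨆ n, δ n) u ≠ g (⨆ n, δ n) := by
    by_cases h : F (⨆ n, δ n) u₁ = g (⨆ n, δ n)
    · exact ⟨g₂, u₂, hc2, fun e => hne (h.trans e.symm)⟩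
    · exact ⟨g₁, u₁, hc1, h⟩
  refine ⟨gb, fun β => if β < ⨆ n, δ n then u β else false, ?_, ?_, ?_, ?_⟩
  · intro n β hβ
    show (if β < ⨆ n, δ n then u β else false) = _
    rw [if_pos (hβ.trans (hlt n))]
    exact hcu n β hβ
  · exact hσ1
  · intro β hβ
    show (if β < ⨆ n, δ n then u β else false) = false
    exact if_neg (not_lt.2 hβ)
  · intro α' hα' hlim
    show F α' (fun β => if β < ⨆ n, δ n then u β else false) ≠ g α'
    rcases eq_or_lt_of_le hα' with he | hl
    · have : F α' (fun β => if β < ⨆ n, δ n then u β else false) = F α' u :=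
        hF α' _ _ fun β hβ => if_pos (hβ.trans_le hα')
      rw [this, he]
      exact hguess
    · obtain ⟨n, hn⟩ := Ordinal.lt_iSup_iff.1 hl
      have hL : (List.ofFn fun i : Fin n => gb i).length = n := by simp
      have hmem' := hmem (List.ofFn fun i : Fin n => gb i)
      rw [hL] at hmem'
      have : F α' (fun β => if β < ⨆ n, δ n then u β else false)
          = F α' (x (List.ofFn fun i : Fin n => gb i)) := by
        refine hF α' _ _ fun β hβ => ?_
        rw [if_pos ((hβ.trans hn).trans (hlt n))]
        exact hcu n β (hβ.trans hn)
      rw [this]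
      exact hmem'.2.2 α' hn.le hlim

/-- Every node of the Gregory tree extends to every countable level. -/
private lemma ext_lemma (F : Ordinal.{0} → (Ordinal.{0} → Bool) → Bool)
    (hF : ∀ (α : Ordinal.{0}) (f g : Ordinal.{0} → Bool), (∀ β < α, f β = g β) → F α f = F α g)
    (hsep : ∀ (δ : ℕ → Ordinal) (x : List Bool → Ordinal.{0} → Bool),
      StrictMono δ → (∀ n, δ n < (Cardinal.aleph.{0} 1).ord) →
      (∀ (s : List Bool) (b : Bool) (β : Ordinal.{0}), β < δ s.length → x (s ++ [b]) β = x s β) →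
      (∀ s : List Bool, x (s ++ [false]) (δ s.length) ≠ x (s ++ [true]) (δ s.length)) →
      ∃ (g₁ g₂ : ℕ → Bool) (u₁ u₂ : Ordinal.{0} → Bool),
        (∀ (n : ℕ) (β : Ordinal.{0}), β < δ n → u₁ β = x (List.ofFn fun i : Fin n => g₁ i) β) ∧
        (∀ (n : ℕ) (β : Ordinal.{0}), β < δ n → u₂ β = x (List.ofFn fun i : Fin n => g₂ i) β) ∧
        F (⨆ n, δ n) u₁ ≠ F (⨆ n, δ n) u₂)
    (g : Ordinal.{0} → Bool) :
    ∀ α < (Cardinal.aleph.{0} 1).ord, ∀ p ∈ GregoryTree F g, p.1 ≤ α →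
      ∃ u, (α, u) ∈ GregoryTree F g ∧ ple p (α, u) := by
  intro α
  induction α using Ordinal.induction with
  | h α IH =>
    intro hα p hp hpα
    rcases eq_or_lt_of_le hpα with he | hplt
    · refine ⟨p.2, ?_, hpα, fun _ _ => rfl⟩
      rwa [← he, Prod.mk.eta]
    rcases Ordinal.zero_or_succ_or_isSuccLimit α with rfl | ⟨β, rfl⟩ | hlim
    · exact absurd hplt not_lt_zero'
    · -- successor
      have hβ : β < Order.succ β := Order.lt_succ β
      obtain ⟨v, hv, hpv⟩ := IH β hβ (hβ.trans hα) p hp (Order.lt_succ_iff.1 hplt)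
      refine ⟨v, ⟨hα, ?_, ?_⟩, hpv.1.trans hβ.le, hpv.2⟩
      · intro γ hγ
        exact hv.2.1 γ ((Order.le_succ β).trans hγ)
      · intro α' hα' hlim'
        have hle : α' ≤ β := by
          rcases lt_or_eq_of_le hα' with hl | he
          · exact Order.lt_succ_iff.1 hl
          · have he' : α' = Order.succ β := he
            exact absurd (he' ▸ hlim') (Order.not_isSuccLimit_succ β)
        exact hv.2.2 α' hle hlim'
    · -- limit
      -- a cofinal ω-sequence in α
      have hcount : (Set.Iio α).Countable := by
        have h1 : α.card ≤ Cardinal.aleph0 := by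
          refine Order.lt_succ_iff.1 ?_
          rw [Cardinal.succ_aleph0]
          exact Cardinal.lt_ord.1 hα
        have h2 : #(Set.Iio α) ≤ Cardinal.aleph0 := by
          rw [Ordinal.mk_Iio_ordinal]
          calc Cardinal.lift.{1} α.card ≤ Cardinal.lift.{1} Cardinal.aleph0 :=
                Cardinal.lift_le.2 h1
            _ = Cardinal.aleph0 := Cardinal.lift_aleph0
        exact Set.countable_coe_iff.1 (Cardinal.mk_le_aleph0_iff.1 h2)
      obtain ⟨e0, he0⟩ := hcount.exists_surjective ⟨0, Set.mem_Iio.mpr hlim.pos⟩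
      set e : ℕ → Ordinal.{0} := fun n => (e0 n : Ordinal) with he_def
      have he1 : ∀ n, e n < α := fun n => Set.mem_Iio.mp (e0 n).2
      have he2 : ∀ β < α, ∃ n, β ≤ e n := by
        intro β hβ
        obtain ⟨n, hn⟩ := he0 ⟨β, Set.mem_Iio.mpr hβ⟩
        exact ⟨n, le_of_eq (congrArg Subtype.val hn).symm⟩
      -- the interpolating sequence
      set δ : ℕ → Ordinal.{0} := fun n => Nat.rec p.1 (fun m d => max (d + 1) (e m)) n with hδ_def
      have hδ0 : δ 0 = p.1 := rfl
      have hδs : ∀ n, δ (n + 1) = max (δ n + 1) (e n) := fun _ => rfl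
      have hδmono : StrictMono δ := by
        refine strictMono_nat_of_lt_succ fun n => ?_
        rw [hδs n]
        exact lt_of_lt_of_le (olt_add_one _) (le_max_left _ _)
      have hδlt : ∀ n, δ n < α := by
        intro n
        induction n with
        | zero => exact hplt
        | succ m ih =>
          rw [hδs m]
          refine max_lt ?_ (he1 m)
          rw [Ordinal.add_one_eq_succ]
          exact hlim.succ_lt ih
      have hδ1 : ∀ n, δ n < (Cardinal.aleph.{0} 1).ord := fun n => (hδlt n).trans hα
      have hsup : (⨆ n, δ n) = α := by
        refine le_antisymm (Ordinal.iSup_le fun n => (hδlt n).le) (le_of_forall_lt fun c hc => ?_)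
        obtain ⟨n, hn⟩ := he2 c hc
        calc c ≤ e n := hn
          _ ≤ δ (n + 1) := by rw [hδs n]; exact le_max_right _ _
          _ < δ (n + 2) := hδmono (n + 1).lt_succ_self
          _ ≤ ⨆ n, δ n := Ordinal.le_iSup δ (n + 2)
      -- build the fan
      set T := GregoryTree F g with hT_def
      set Y : List Bool → (Ordinal.{0} → Bool) := fanAux T δ p.2 with hY_def
      have hstep : ∀ (l : List Bool) (b : Bool), (δ l.length, Y l) ∈ T →
          (δ (l.length + 1), Y (b :: l)) ∈ T ∧
            ple (δ l.length + 1, Function.update (Y l) (δ l.length) b)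
              (δ (l.length + 1), Y (b :: l)) := by
        intro l b hl
        have hint : (δ l.length + 1, Function.update (Y l) (δ l.length) b) ∈ T :=
          step_mem hF hl b
        have hex : ∃ u, (δ (l.length + 1), u) ∈ T ∧
            ple (δ l.length + 1, Function.update (Y l) (δ l.length) b) (δ (l.length + 1), u) := by
          obtain ⟨u, hu1, hu2⟩ := IH (δ (l.length + 1)) (hδlt (l.length + 1)) (hδ1 (l.length + 1)) _ hint
            (oadd_one_le (hδmono l.length.lt_succ_self))
          exact ⟨u, hu1, hu2⟩
        have hpick := pick_spec hex
        have hYeq : Y (b :: l) = pick T (δ l.length) (δ (l.length + 1)) (Y l) b := rfl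
        rw [hYeq]
        exact hpick
      have hYmem : ∀ l : List Bool, (δ l.length, Y l) ∈ T := by
        intro l
        induction l with
        | nil =>
          show (δ 0, fanAux T δ p.2 []) ∈ T
          rw [hδ0]
          show (p.1, p.2) ∈ T
          rwa [Prod.mk.eta]
        | cons b t ih => exact (hstep t b ih).1
      set x : List Bool → (Ordinal.{0} → Bool) := fun s => Y s.reverse with hx_def
      have hxrev : ∀ (s : List Bool) (b : Bool), x (s ++ [b]) = Y (b :: s.reverse) := by
        intro s b
        show Y (s ++ [b]).reverse = _
        rw [List.reverse_append]
        rfl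
      have hlenrev : ∀ s : List Bool, s.reverse.length = s.length := fun s => List.length_reverse
      have hxmem : ∀ s : List Bool, (δ s.length, x s) ∈ T := by
        intro s
        have := hYmem s.reverse
        rwa [hlenrev] at this
      have hxple : ∀ (s : List Bool) (b : Bool),
          ple (δ s.length + 1, Function.update (x s) (δ s.length) b)
            (δ (s.length + 1), x (s ++ [b])) := by
        intro s b
        have := (hstep s.reverse b (hYmem s.reverse)).2
        rw [hlenrev] at this
        rwa [hxrev]
      have hxcoh : ∀ (s : List Bool) (b : Bool) (β : Ordinal.{0}),
          β < δ s.length → x (s ++ [b]) β = x s β := by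
        intro s b β hβ
        have h1 : Function.update (x s) (δ s.length) b β = x (s ++ [b]) β :=
          (hxple s b).2 β (hβ.trans (olt_add_one _))
        rw [Function.update_of_ne (ne_of_lt hβ)] at h1
        exact h1.symm
      have hxval : ∀ (s : List Bool) (b : Bool), x (s ++ [b]) (δ s.length) = b := by
        intro s b
        have h1 : Function.update (x s) (δ s.length) b (δ s.length) = x (s ++ [b]) (δ s.length) :=
          (hxple s b).2 (δ s.length) (olt_add_one _)
        rw [Function.update_self] at h1
        exact h1.symm
      have hxsplit : ∀ s : List Bool,
          x (s ++ [false]) (δ s.length) ≠ x (s ++ [true]) (δ s.length) := by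
        intro s
        rw [hxval s false, hxval s true]
        exact Bool.false_ne_true
      obtain ⟨gb, u, hu1, hu2⟩ := fan_closed F hF hsep g δ x hδmono hδ1 hxmem hxcoh hxsplit
      rw [hsup] at hu2
      refine ⟨u, hu2, hplt.le, fun β hβ => ?_⟩
      have h1 := hu1 0 β (by rw [hδ0]; exact hβ)
      have h2 : (List.ofFn fun i : Fin 0 => gb i) = ([] : List Bool) := List.ofFn_zero
      rw [h2] at h1
      have h3 : x [] = p.2 := rfl
      rw [h3] at h1
      exact h1.symm

end GregoryAux

/-- Assume `F : 2^{<ω₁} → 2` (depending only on `f ↾ α`) separates the cofinal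
branches of `ℵ₀`-fans of `2^{<ω₁}`, and `g` is a weak diamond guessing sequence
for `F`.  Then `T = {f ∈ 2^{<ω₁} : F (f ↾ α) ≠ g α for all limit points α of dom f}`
is a splitting tree of height `ω₁` in which every node has at most `2^{ℵ₀}` immediate
successors, and `T` is `ℵ₀`-fan closed. -/
theorem stmt_10 (F : Ordinal.{0} → (Ordinal.{0} → Bool) → Bool)
    (hF : ∀ (α : Ordinal.{0}) (f g : Ordinal.{0} → Bool), (∀ β < α, f β = g β) → F α f = F α g)
    (hsep : ∀ (δ : ℕ → Ordinal) (x : List Bool → Ordinal.{0} → Bool),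
      StrictMono δ → (∀ n, δ n < (Cardinal.aleph.{0} 1).ord) →
      (∀ (s : List Bool) (b : Bool) (β : Ordinal.{0}), β < δ s.length → x (s ++ [b]) β = x s β) →
      (∀ s : List Bool, x (s ++ [false]) (δ s.length) ≠ x (s ++ [true]) (δ s.length)) →
      ∃ (g₁ g₂ : ℕ → Bool) (u₁ u₂ : Ordinal.{0} → Bool),
        (∀ (n : ℕ) (β : Ordinal.{0}), β < δ n → u₁ β = x (List.ofFn fun i : Fin n => g₁ i) β) ∧
        (∀ (n : ℕ) (β : Ordinal.{0}), β < δ n → u₂ β = x (List.ofFn fun i : Fin n => g₂ i) β) ∧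
        F (⨆ n, δ n) u₁ ≠ F (⨆ n, δ n) u₂)
    (g : Ordinal.{0} → Bool)
    (hWD : ∀ f : Ordinal.{0} → Bool,
      IsStationaryIn {α | α < (Cardinal.aleph.{0} 1).ord ∧ F α f = g α} (Cardinal.aleph.{0} 1).ord) :
    -- splitting: at least two immediate successors
    (∀ p ∈ GregoryTree F g, ∃ q ∈ GregoryTree F g, ∃ r ∈ GregoryTree F g,
      q ≠ r ∧ ple p q ∧ p ≠ q ∧ ple p r ∧ p ≠ r ∧
      (¬ ∃ s ∈ GregoryTree F g, ple p s ∧ ple s q ∧ s ≠ p ∧ s ≠ q) ∧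
      (¬ ∃ s ∈ GregoryTree F g, ple p s ∧ ple s r ∧ s ≠ p ∧ s ≠ r)) ∧
    -- unique limits: a node is determined by its domain and values
    (∀ p ∈ GregoryTree F g, ∀ q ∈ GregoryTree F g,
      p.1 = q.1 → (∀ β < p.1, p.2 β = q.2 β) → p = q) ∧
    -- height ω₁
    (∀ α < (Cardinal.aleph.{0} 1).ord, ∃ p ∈ GregoryTree F g, p.1 = α) ∧
    -- at most 2^ℵ₀ immediate successors
    (∀ p ∈ GregoryTree F g,
      #{q | q ∈ GregoryTree F g ∧ ple p q ∧ p ≠ q ∧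
        ¬ ∃ r ∈ GregoryTree F g, ple p r ∧ ple r q ∧ r ≠ p ∧ r ≠ q} ≤
        Cardinal.lift.{1} ((2 : Cardinal.{0}) ^ Cardinal.aleph0)) ∧
    -- ℵ₀-closed (trivially: finite chains are bounded)
    (∀ c : Set (Ordinal.{0} × (Ordinal.{0} → Bool)), c ⊆ GregoryTree F g → c.Nonempty →
      IsChain ple c → c.Finite → ∃ ub ∈ GregoryTree F g, ∀ p ∈ c, ple p ub) ∧
    -- ℵ₀-fan closed
    (∀ (δ : ℕ → Ordinal) (x : List Bool → Ordinal.{0} → Bool),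
      StrictMono δ → (∀ n, δ n < (Cardinal.aleph.{0} 1).ord) →
      (∀ s : List Bool, (δ s.length, x s) ∈ GregoryTree F g) →
      (∀ (s : List Bool) (b : Bool) (β : Ordinal.{0}), β < δ s.length → x (s ++ [b]) β = x s β) →
      (∀ s : List Bool, x (s ++ [false]) (δ s.length) ≠ x (s ++ [true]) (δ s.length)) →
      ∃ (gb : ℕ → Bool) (u : Ordinal.{0} → Bool),
        (∀ (n : ℕ) (β : Ordinal.{0}), β < δ n → u β = x (List.ofFn fun i : Fin n => gb i) β) ∧
        (⨆ n, δ n, u) ∈ GregoryTree F g) := by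
  have huniq : ∀ p ∈ GregoryTree F g, ∀ q ∈ GregoryTree F g,
      p.1 = q.1 → (∀ β < p.1, p.2 β = q.2 β) → p = q := fun p hp q hq h1 h2 =>
    gt_unique hp hq h1 h2
  refine ⟨?_, huniq, ?_, ?_, ?_, ?_⟩
  · -- splitting
    intro p hp
    have hp' : (p.1, p.2) ∈ GregoryTree F g := by rwa [Prod.mk.eta]
    have hq := step_mem hF hp' false
    have hr := step_mem hF hp' true
    have hlt1 : p.1 < p.1 + 1 := olt_add_one p.1
    have hple : ∀ b : Bool, ple p (p.1 + 1, Function.update p.2 p.1 b) := by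
      intro b
      exact ⟨hlt1.le, fun β hβ => (Function.update_of_ne (ne_of_lt hβ) b p.2).symm⟩
    have hne : ∀ b : Bool, p ≠ (p.1 + 1, Function.update p.2 p.1 b) := by
      intro b h
      exact absurd (congrArg Prod.fst h) (ne_of_lt hlt1)
    have himm : ∀ b : Bool, ¬∃ s ∈ GregoryTree F g,
        ple p s ∧ ple s (p.1 + 1, Function.update p.2 p.1 b) ∧ s ≠ p ∧
          s ≠ (p.1 + 1, Function.update p.2 p.1 b) := by
      intro b
      rintro ⟨s, hs, hps, hsq, hsp, hsq'⟩
      have hb : (p.1 + 1, Function.update p.2 p.1 b) ∈ GregoryTree F g := step_mem hF hp' b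
      have h1 : s.1 ≤ p.1 + 1 := hsq.1
      rcases lt_or_eq_of_le h1 with hl | he
      · have hsp1 : s.1 = p.1 := le_antisymm (ole_of_lt_add_one hl) hps.1
        exact hsp (gt_unique hs hp hsp1 fun β hβ => (hps.2 β (hsp1 ▸ hβ)).symm)
      · exact hsq' (gt_unique hs hb he fun β hβ => hsq.2 β hβ)
    refine ⟨(p.1 + 1, Function.update p.2 p.1 false), hq,
      (p.1 + 1, Function.update p.2 p.1 true), hr, ?_, hple false, hne false,
      hple true, hne true, himm false, himm true⟩
    intro h
    have := congrArg (fun z => z.2 p.1) h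
    simp only [Function.update_self] at this
    exact Bool.false_ne_true this
  · -- height ω₁
    intro α hα
    have hroot : ((0 : Ordinal.{0}), fun _ : Ordinal.{0} => false) ∈ GregoryTree F g := by
      refine ⟨o1_limit.pos, fun _ _ => rfl, fun α' h1 h2 => ?_⟩
      exact absurd (nonpos_iff_eq_zero.1 h1 ▸ h2) Ordinal.not_isSuccLimit_zero
    obtain ⟨u, hu, -⟩ := ext_lemma F hF hsep g α hα _ hroot (zero_le (a := α))
    exact ⟨(α, u), hu, rfl⟩
  · -- at most 2^ℵ₀ immediate successors
    intro p hp
    set w : Bool → (Ordinal.{0} → Bool) := fun b β =>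
      if β < p.1 then p.2 β else if β = p.1 then b else false with hw_def
    have hsub : {q | q ∈ GregoryTree F g ∧ ple p q ∧ p ≠ q ∧
        ¬ ∃ r ∈ GregoryTree F g, ple p r ∧ ple r q ∧ r ≠ p ∧ r ≠ q} ⊆
        {(p.1 + 1, w false), (p.1 + 1, w true)} := by
      rintro q ⟨hq, hpq, hne, himm⟩
      have hlt : p.1 < q.1 := by
        rcases lt_or_eq_of_le hpq.1 with h | h
        · exact h
        · exact absurd (gt_unique hp hq h hpq.2) hne
      have hq1 : q.1 = p.1 + 1 := by
        by_contra hne1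
        have hlt' : p.1 + 1 < q.1 := lt_of_le_of_ne (oadd_one_le hlt) (Ne.symm hne1)
        refine himm ⟨(p.1 + 1, fun β => if β < p.1 + 1 then q.2 β else false), ?_, ?_, ?_, ?_, ?_⟩
        · refine ⟨hlt'.trans hq.1, fun β hβ => if_neg (not_lt.2 hβ), ?_⟩
          intro α' hα' hlim
          show F α' (fun β => if β < p.1 + 1 then q.2 β else false) ≠ g α'
          have : F α' (fun β => if β < p.1 + 1 then q.2 β else false) = F α' q.2 :=
            hF α' _ _ fun β hβ => if_pos (hβ.trans_le hα')
          rw [this]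
          exact hq.2.2 α' (hα'.trans hlt'.le) hlim
        · exact ⟨(olt_add_one p.1).le, fun β hβ =>
            (hpq.2 β hβ).trans (if_pos (hβ.trans (olt_add_one p.1))).symm⟩
        · exact ⟨hlt'.le, fun β hβ => if_pos hβ⟩
        · intro h
          exact absurd (congrArg Prod.fst h) (ne_of_gt (olt_add_one p.1))
        · intro h
          exact absurd (congrArg Prod.fst h) (ne_of_lt hlt')
      have hqeq : q = (p.1 + 1, w (q.2 p.1)) := by
        refine gt_unique hq ?_ hq1 ?_
        · refine ⟨hq1 ▸ hq.1, ?_, ?_⟩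
          · intro β hβ
            show w (q.2 p.1) β = false
            have h1 : ¬β < p.1 := not_lt.2 ((olt_add_one p.1).le.trans hβ)
            have h2 : β ≠ p.1 := fun h => absurd (h ▸ hβ) (not_le.2 (olt_add_one p.1))
            have hb : w (q.2 p.1) β
                = if β < p.1 then p.2 β else if β = p.1 then q.2 p.1 else false := rfl
            rw [hb, if_neg h1, if_neg h2]
          · intro α' hα' hlim
            show F α' (w (q.2 p.1)) ≠ g α'
            have : F α' (w (q.2 p.1)) = F α' q.2 := by
              refine hF α' _ _ fun β hβ => ?_
              have hβ' : β < p.1 + 1 := hβ.trans_le hα'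
              have hb : w (q.2 p.1) β
                  = if β < p.1 then p.2 β else if β = p.1 then q.2 p.1 else false := rfl
              rcases lt_trichotomy β p.1 with h | h | h
              · rw [hb, if_pos h]
                exact hpq.2 β h
              · rw [hb, if_neg (show ¬β < p.1 by rw [h]; exact lt_irrefl p.1), if_pos h, h]
              · exact absurd hβ' (not_lt.2 (oadd_one_le h))
            rw [this]
            exact hq.2.2 α' (hq1 ▸ hα') hlim
        · intro β hβ
          rw [hq1] at hβ
          have hb : w (q.2 p.1) β
              = if β < p.1 then p.2 β else if β = p.1 then q.2 p.1 else false := rfl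
          rcases lt_trichotomy β p.1 with h | h | h
          · show q.2 β = w (q.2 p.1) β
            rw [hb, if_pos h]
            exact (hpq.2 β h).symm
          · show q.2 β = w (q.2 p.1) β
            rw [hb, if_neg (show ¬β < p.1 by rw [h]; exact lt_irrefl p.1), if_pos h, h]
          · exact absurd hβ (not_lt.2 (oadd_one_le h))
      cases hb : q.2 p.1 with
      | false => rw [hqeq, hb]; exact Set.mem_insert _ _
      | true => rw [hqeq, hb]; exact Set.mem_insert_of_mem _ rfl
    refine (Cardinal.mk_le_mk_of_subset hsub).trans ?_
    have h2 : #({(p.1 + 1, w false), (p.1 + 1, w true)} :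
        Set (Ordinal.{0} × (Ordinal.{0} → Bool))) ≤ 2 := by
      refine Cardinal.mk_insert_le.trans ?_
      rw [Cardinal.mk_singleton]
      norm_num
    refine h2.trans ?_
    have h3 : (2 : Cardinal.{0}) ≤ 2 ^ Cardinal.aleph0 :=
      Cardinal.self_le_power 2 Cardinal.one_le_aleph0
    calc (2 : Cardinal.{1}) = Cardinal.lift.{1} 2 := Cardinal.lift_two.symm
      _ ≤ Cardinal.lift.{1} ((2 : Cardinal.{0}) ^ Cardinal.aleph0) := Cardinal.lift_le.2 h3
  · -- finite chains are bounded
    intro c hc hne hchain hfin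
    obtain ⟨p, hpc, hmax⟩ := Set.Finite.exists_maximalFor Prod.fst c hfin hne
    refine ⟨p, hc hpc, fun q hq => ?_⟩
    rcases eq_or_ne q p with rfl | hqp
    · exact ple_refl q
    rcases hchain hq hpc hqp with h | h
    · exact h
    · have heq : p.1 = q.1 := le_antisymm h.1 (hmax hq h.1)
      exact ⟨heq.ge, fun β hβ => (h.2 β (heq ▸ hβ)).symm⟩
  · -- ℵ₀-fan closed
    exact fan_closed F hF hsep g
end

section
/- Let κ be regular uncountable and (u_β : β < κ) coherent with each u_β closed in β and unbounded in β for limit β, and γ ∈ u_β ⟹ u_γ = u_β ∩ γ. Let E₀ = acc κ (the limit ordinals below κ) and for δ in a set D of limit ordinals define C⁰_δ = drop(u_δ, E₀). Then each C⁰_δ is club in δ, and if δ' ∈ u_δ ∩ D ∩ E₀ then C⁰_{δ'} = C⁰_δ ∩ δ'. -/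
open Cardinal Set

/-- `drop u E = {sup (E ∩ α) : α ∈ u, α > min E}`. -/
def drop (u E : Set Ordinal) : Set Ordinal :=
  {o | ∃ α ∈ u, sInf E < α ∧ o = sSup (E ∩ Set.Iio α)}

lemma bdd_of_subset_Iio {s : Set Ordinal} {β : Ordinal} (h : s ⊆ Set.Iio β) :
    BddAbove s := ⟨β, fun _ hx => (h hx).le⟩

lemma isLimit_sSup {s : Set Ordinal} (hne : s.Nonempty) (hbd : BddAbove s)
    (h : ∀ x ∈ s, Order.IsSuccLimit x) : Order.IsSuccLimit (sSup s) := by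
  obtain ⟨x, hx⟩ := hne
  rw [Ordinal.isSuccLimit_iff]
  constructor
  · intro h0
    have := le_csSup hbd hx
    rw [h0, nonpos_iff_eq_zero] at this
    exact (Ordinal.isSuccLimit_iff.mp (h x hx)).1 this
  · rw [Order.isSuccPrelimit_iff_succ_lt]
    intro a ha
    obtain ⟨y, hy, hay⟩ := exists_lt_of_lt_csSup ⟨x, hx⟩ ha
    exact lt_of_lt_of_le ((h y hy).succ_lt hay) (le_csSup hbd hy)

/-- Let `κ` be regular uncountable and `(u_β : β < κ)` a coherent sequence (each `u_β`
closed in `β`, unbounded in `β` for limit `β`, and `γ ∈ u_β ⟹ u_γ = u_β ∩ γ`).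
Let `E₀ = acc κ` be the set of limit ordinals below `κ` and, for `δ` in a set `D` of
accumulation points of `E₀`, let `C⁰_δ = drop (u_δ, E₀)`.  Then each `C⁰_δ` is club in
`δ`, and `δ' ∈ u_δ ∩ D ∩ E₀` implies `C⁰_{δ'} = C⁰_δ ∩ δ'`. -/
theorem stmt_17 (κ : Cardinal) (hreg : κ.IsRegular) (hunc : ℵ₀ < κ)
    (u : Ordinal → Set Ordinal)
    (hsub : ∀ β < κ.ord, u β ⊆ Set.Iio β)
    (hclosed : ∀ β < κ.ord, ∀ α < β, α ≠ 0 → sSup (u β ∩ Set.Iio α) = α → α ∈ u β)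
    (hunb : ∀ β < κ.ord, Order.IsSuccLimit β → ∀ α < β, ∃ γ ∈ u β, α ≤ γ)
    (hcoh : ∀ β < κ.ord, ∀ γ ∈ u β, u γ = u β ∩ Set.Iio γ)
    (E₀ : Set Ordinal) (hE₀ : E₀ = {α | α < κ.ord ∧ Order.IsSuccLimit α})
    (D : Set Ordinal)
    (hD : ∀ δ ∈ D, δ < κ.ord ∧ Order.IsSuccLimit δ ∧ sSup (E₀ ∩ Set.Iio δ) = δ) :
    (∀ δ ∈ D, IsClubIn (drop (u δ) E₀) δ) ∧
    (∀ δ ∈ D, ∀ δ', δ' ∈ u δ ∩ D ∩ E₀ →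
      drop (u δ') E₀ = drop (u δ) E₀ ∩ Set.Iio δ') := by
  have hωκ : (Ordinal.omega0 : Ordinal) < κ.ord := by
    rw [← Cardinal.ord_aleph0]; exact Cardinal.ord_lt_ord.mpr hunc
  have hE₀ne : E₀.Nonempty := ⟨Ordinal.omega0, by
    rw [hE₀]; exact ⟨hωκ, Ordinal.isSuccLimit_omega0⟩⟩
  have hInf : sInf E₀ ∈ E₀ := csInf_mem hE₀ne
  have hE₀mem : ∀ x : Ordinal, x < κ.ord → Order.IsSuccLimit x → x ∈ E₀ := by
    intro x h1 h2; rw [hE₀]; exact ⟨h1, h2⟩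
  have hE₀lim : ∀ x ∈ E₀, Order.IsSuccLimit x := by
    intro x hx; rw [hE₀] at hx; exact hx.2
  -- basic facts about `sSup (E₀ ∩ Iio γ)` when `sInf E₀ < γ`
  have hkey : ∀ γ : Ordinal, sInf E₀ < γ →
      sInf E₀ ≤ sSup (E₀ ∩ Set.Iio γ) ∧ sSup (E₀ ∩ Set.Iio γ) ≤ γ ∧
      Order.IsSuccLimit (sSup (E₀ ∩ Set.Iio γ)) := by
    intro γ hγ
    have hne : (E₀ ∩ Set.Iio γ).Nonempty := ⟨sInf E₀, hInf, hγ⟩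
    have hbd : BddAbove (E₀ ∩ Set.Iio γ) := bdd_of_subset_Iio inter_subset_right
    refine ⟨le_csSup hbd ⟨hInf, hγ⟩, csSup_le hne fun x hx => hx.2.le, ?_⟩
    exact isLimit_sSup hne hbd fun x hx => hE₀lim x hx.1
  -- membership of drop elements in E₀ ∩ Iio δ
  have hdropsub : ∀ δ < κ.ord, drop (u δ) E₀ ⊆ E₀ ∩ Set.Iio δ := by
    intro δ hδκ o ho
    obtain ⟨α, hαu, hαinf, rfl⟩ := ho
    obtain ⟨h1, h2, h3⟩ := hkey α hαinf
    have hαδ := hsub δ hδκ hαu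
    exact ⟨hE₀mem _ (lt_of_le_of_lt h2 (hαδ.trans hδκ)) h3, lt_of_le_of_lt h2 hαδ⟩
  -- key: witnesses below a closure/cut point
  have hwit : ∀ δ ∈ D, ∀ μ, μ < κ.ord → Order.IsSuccLimit μ →
      (∀ x ∈ drop (u δ) E₀ ∩ Set.Iio μ, True) →
      ∀ o ∈ drop (u δ) E₀, o < μ → sSup (E₀ ∩ Set.Iio μ) = μ →
      ∀ α ∈ u δ, sInf E₀ < α → o = sSup (E₀ ∩ Set.Iio α) → α < μ := by
    intro δ hδ μ hμκ hμlim _ o _ hoμ hμacc α hαu hαinf hoeq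
    by_contra hαμ
    push_neg at hαμ
    rcases lt_or_eq_of_le hαμ with hlt | heq
    · -- μ < α : μ ∈ E₀ ∩ Iio α, so o ≥ μ, contradiction
      have hμE : μ ∈ E₀ := hE₀mem μ hμκ hμlim
      have : μ ≤ o := by
        rw [hoeq]
        exact le_csSup (bdd_of_subset_Iio inter_subset_right) ⟨hμE, hlt⟩
      exact absurd hoμ (not_lt.mpr this)
    · -- μ = α : o = sSup (E₀ ∩ Iio μ) = μ, contradiction
      rw [← heq] at hoeq
      rw [hoeq, hμacc] at hoμ
      exact lt_irrefl _ hoμ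
  constructor
  · -- each drop is a club in δ
    intro δ hδ
    obtain ⟨hδκ, hδlim, hδacc⟩ := hD δ hδ
    refine ⟨fun o ho => (hdropsub δ hδκ ho).2, ?_, ?_⟩
    · -- unbounded
      intro α hα
      have hne : (E₀ ∩ Set.Iio δ).Nonempty := by
        by_contra h
        rw [not_nonempty_iff_eq_empty] at h
        rw [h, csSup_empty] at hδacc
        exact hδlim.ne_bot hδacc.symm
      obtain ⟨lam, hlam, halam⟩ : ∃ x ∈ E₀ ∩ Set.Iio δ, α < x := by
        rw [← hδacc] at hα
        exact exists_lt_of_lt_csSup hne hα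
      obtain ⟨γ, hγu, hγge⟩ := hunb δ hδκ hδlim (Order.succ lam) (hδlim.succ_lt hlam.2)
      have hlamγ : lam < γ := lt_of_lt_of_le (Order.lt_succ lam) hγge
      have hinfγ : sInf E₀ < γ :=
        lt_of_le_of_lt (csInf_le (OrderBot.bddBelow E₀) hlam.1) hlamγ
      refine ⟨sSup (E₀ ∩ Set.Iio γ), ⟨γ, hγu, hinfγ, rfl⟩, ?_⟩
      exact le_of_lt (lt_of_lt_of_le halam
        (le_csSup (bdd_of_subset_Iio inter_subset_right) ⟨hlam.1, hlamγ⟩))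
    · -- closed
      intro α hαδ hα0 hsupα
      set s := drop (u δ) E₀ ∩ Set.Iio α with hs
      have hsne : s.Nonempty := by
        by_contra h
        rw [not_nonempty_iff_eq_empty] at h
        rw [h, csSup_empty] at hsupα
        exact hα0 hsupα.symm
      have hsE : s ⊆ E₀ ∩ Set.Iio α :=
        fun x hx => ⟨(hdropsub δ hδκ hx.1).1, hx.2⟩
      have hακ : α < κ.ord := hαδ.trans hδκ
      -- α = sSup (E₀ ∩ Iio α)
      have hαacc : sSup (E₀ ∩ Set.Iio α) = α := by
        refine le_antisymm (csSup_le (hsne.mono hsE) fun x hx => hx.2.le) ?_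
        calc α = sSup s := hsupα.symm
          _ ≤ sSup (E₀ ∩ Set.Iio α) :=
            csSup_le_csSup (bdd_of_subset_Iio inter_subset_right) hsne hsE
      -- α is a limit ordinal
      have hαlim : Order.IsSuccLimit α := by
        rw [← hsupα]
        exact isLimit_sSup hsne (bdd_of_subset_Iio inter_subset_right)
          fun x hx => hE₀lim x (hsE hx).1
      -- α ∈ u δ via closure of u δ
      have hαu : α ∈ u δ := by
        apply hclosed δ hδκ α hαδ hα0
        have hub : ∀ o ∈ s, o ≤ sSup (u δ ∩ Set.Iio α) := by
          intro o ho
          obtain ⟨γ, hγu, hγinf, hoeq⟩ := ho.1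
          have hγα : γ < α := hwit δ hδ α hακ hαlim (fun _ _ => trivial) o ho.1 ho.2
            hαacc γ hγu hγinf hoeq
          have hoγ : o ≤ γ := by rw [hoeq]; exact (hkey γ hγinf).2.1
          exact hoγ.trans (le_csSup (bdd_of_subset_Iio inter_subset_right) ⟨hγu, hγα⟩)
        have hne2 : (u δ ∩ Set.Iio α).Nonempty := by
          obtain ⟨o, ho⟩ := hsne
          obtain ⟨γ, hγu, hγinf, hoeq⟩ := ho.1
          exact ⟨γ, hγu, hwit δ hδ α hακ hαlim (fun _ _ => trivial) o ho.1 ho.2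
            hαacc γ hγu hγinf hoeq⟩
        have hge : sSup (u δ ∩ Set.Iio α) ≤ α := csSup_le hne2 fun x hx => hx.2.le
        have hle : α ≤ sSup (u δ ∩ Set.Iio α) := by
          conv_lhs => rw [← hsupα]
          exact csSup_le hsne hub
        exact le_antisymm hge hle
      -- sInf E₀ < α
      have hinfα : sInf E₀ < α := by
        obtain ⟨o, ho⟩ := hsne
        obtain ⟨γ, hγu, hγinf, hoeq⟩ := ho.1
        have : sInf E₀ ≤ o := by rw [hoeq]; exact (hkey γ hγinf).1
        exact lt_of_le_of_lt this ho.2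
      exact ⟨α, hαu, hinfα, hαacc.symm⟩
  · -- coherence
    intro δ hδ δ' hδ'
    obtain ⟨⟨hδ'u, hδ'D⟩, hδ'E⟩ := hδ'
    obtain ⟨hδκ, hδlim, hδacc⟩ := hD δ hδ
    obtain ⟨hδ'κ, hδ'lim, hδ'acc⟩ := hD δ' hδ'D
    have hu' : u δ' = u δ ∩ Set.Iio δ' := hcoh δ hδκ δ' hδ'u
    ext o
    constructor
    · rintro ⟨α, hαu, hαinf, rfl⟩
      rw [hu'] at hαu
      exact ⟨⟨α, hαu.1, hαinf, rfl⟩, lt_of_le_of_lt (hkey α hαinf).2.1 hαu.2⟩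
    · rintro ⟨⟨α, hαu, hαinf, rfl⟩, hoδ'⟩
      have hαδ' : α < δ' := hwit δ hδ δ' hδ'κ hδ'lim (fun _ _ => trivial)
        _ ⟨α, hαu, hαinf, rfl⟩ hoδ' hδ'acc α hαu hαinf rfl
      exact ⟨α, by rw [hu']; exact ⟨hαu, hαδ'⟩, hαinf, rfl⟩
end
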